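/- arXiv:1302.0142 — 6 statements merged into one kernel-verified Lean document; each statement's English description precedes it below -/
import Mathlib

section
/- Let I and D be finite nonempty sets, for each d ∈ D let I^d ⊆ I be nonempty, let ν > 0, θ_i^d ∈ ℝ, ρ^d > 0 for each d ∈ D, and for each i ∈ I let V_i : ℝ → ℝ be antitone and continuous. Then the function J((ρ_i^d)_{d∈D, i∈I^d}) = Σ_{i∈I} ∫_0^{ρ_i} V_i(r) dr + Σ_{d∈D} Σ_{i∈I^d} θ_i^d ρ_i^d − ν Σ_{d∈D} Σ_{i∈I^d} ρ^d H(ρ_i^d/ρ^d), where ρ_i = Σ_{d : i∈I^d} ρ_i^d, is strictly concave on the convex set {(ρ_i^d) | ρ_i^d > 0 for all d, i ∈ I^d, and Σ_{i∈I^d} ρ_i^d = ρ^d for all d}. -/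
open Finset Real

/-- The negentropy function `H(x) = x (ln x - 1)`. -/
noncomputable def negentropy (x : ℝ) : ℝ := x * (Real.log x - 1)

lemma negentropy_strictConvexOn : StrictConvexOn ℝ (Set.Ici (0:ℝ)) negentropy := by
  have h : negentropy = (fun x : ℝ => x * Real.log x) + fun x : ℝ => -x := by
    funext x; simp [negentropy]; ring
  rw [h]
  exact Real.strictConvexOn_mul_log.add_convexOn (concaveOn_id (convex_Ici 0)).neg

lemma integral_concaveOn {V : ℝ → ℝ} (hV : Antitone V) (hVc : Continuous V) :
    ConcaveOn ℝ Set.univ (fun t => ∫ s in (0:ℝ)..t, V s) := by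
  have hd : ∀ t : ℝ, HasDerivAt (fun u => ∫ s in (0:ℝ)..u, V s) (V t) t :=
    fun t => (hVc.integral_hasStrictDerivAt 0 t).hasDerivAt
  have hdiff : Differentiable ℝ (fun u => ∫ s in (0:ℝ)..u, V s) :=
    fun t => (hd t).differentiableAt
  refine Antitone.concaveOn_univ_of_deriv hdiff ?_
  have hderiv : deriv (fun u => ∫ s in (0:ℝ)..u, V s) = V := funext fun t => (hd t).deriv
  rw [hderiv]; exact hV

lemma key_le {r u v a b : ℝ} (hrp : 0 < r) (hu : 0 < u) (hv : 0 < v)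
    (ha : 0 ≤ a) (hb : 0 ≤ b) (hab : a + b = 1) :
    r * negentropy ((a * u + b * v) / r)
      ≤ a * (r * negentropy (u / r)) + b * (r * negentropy (v / r)) := by
  have h := negentropy_strictConvexOn.convexOn.2 (Set.mem_Ici.2 (div_pos hu hrp).le)
    (Set.mem_Ici.2 (div_pos hv hrp).le) ha hb hab
  simp only [smul_eq_mul] at h
  have h2 : (a * u + b * v) / r = a * (u / r) + b * (v / r) := by field_simp
  rw [h2]
  nlinarith [mul_le_mul_of_nonneg_left h hrp.le]

lemma key_lt {r u v a b : ℝ} (hrp : 0 < r) (hu : 0 < u) (hv : 0 < v) (huv : u ≠ v)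
    (ha : 0 < a) (hb : 0 < b) (hab : a + b = 1) :
    r * negentropy ((a * u + b * v) / r)
      < a * (r * negentropy (u / r)) + b * (r * negentropy (v / r)) := by
  have hne : u / r ≠ v / r := fun h => huv (by field_simp at h; exact h)
  have h := negentropy_strictConvexOn.2 (Set.mem_Ici.2 (div_pos hu hrp).le)
    (Set.mem_Ici.2 (div_pos hv hrp).le) hne ha hb hab
  simp only [smul_eq_mul] at h
  have h2 : (a * u + b * v) / r = a * (u / r) + b * (v / r) := by field_simp
  rw [h2]
  nlinarith [mul_lt_mul_of_pos_left h hrp]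

/-- The Beckmann-type objective of the Logit lane assignment problem is strictly concave
on the convex set of positive feasible families `(ρ_i^d)_{d ∈ D, i ∈ I^d}`.
Families are encoded as `ρ : D → I → ℝ` vanishing off the accessibility graph
(`ρ d i = 0` whenever `i ∉ Id d`). -/
theorem logit_objective_strictConcaveOn
    (I D : Type*) [Fintype I] [Fintype D] [Nonempty I] [Nonempty D] [DecidableEq I]
    (Id : D → Finset I) (hId : ∀ d, (Id d).Nonempty)
    (ν : ℝ) (hν : 0 < ν) (θ : D → I → ℝ) (r : D → ℝ) (hr : ∀ d, 0 < r d)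
    (V : I → ℝ → ℝ) (hV : ∀ i, Antitone (V i)) (hVc : ∀ i, Continuous (V i)) :
    let S : Set (D → I → ℝ) :=
      {ρ | (∀ d, ∀ i ∈ Id d, 0 < ρ d i) ∧ (∀ d, ∀ i ∉ Id d, ρ d i = 0) ∧
           (∀ d, ∑ i ∈ Id d, ρ d i = r d)}
    let J : (D → I → ℝ) → ℝ := fun ρ =>
      (∑ i, ∫ s in (0:ℝ)..(∑ d ∈ Finset.univ.filter (fun d => i ∈ Id d), ρ d i), V i s)
      + (∑ d, ∑ i ∈ Id d, θ d i * ρ d i)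
      - ν * ∑ d, ∑ i ∈ Id d, r d * negentropy (ρ d i / r d)
    StrictConcaveOn ℝ S J := by
  intro S J
  have hF : ∀ i : I, ConcaveOn ℝ Set.univ (fun t => ∫ s in (0:ℝ)..t, V i s) :=
    fun i => integral_concaveOn (hV i) (hVc i)
  constructor
  · -- convexity of S
    rintro x ⟨hx1, hx2, hx3⟩ y ⟨hy1, hy2, hy3⟩ a b ha hb hab
    refine ⟨?_, ?_, ?_⟩
    · intro d i hi
      have hx := hx1 d i hi; have hy := hy1 d i hi
      simp only [Pi.add_apply, Pi.smul_apply, smul_eq_mul]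
      rcases ha.eq_or_lt with h0 | h0
      · have hb1 : b = 1 := by linarith
        simp [← h0, hb1]; exact hy
      · exact add_pos_of_pos_of_nonneg (mul_pos h0 hx) (mul_nonneg hb hy.le)
    · intro d i hi
      simp [Pi.add_apply, Pi.smul_apply, smul_eq_mul, hx2 d i hi, hy2 d i hi]
    · intro d
      simp only [Pi.add_apply, Pi.smul_apply, smul_eq_mul]
      rw [Finset.sum_add_distrib, ← Finset.mul_sum, ← Finset.mul_sum, hx3, hy3]
      have : a * r d + b * r d = (a + b) * r d := by ring
      rw [this, hab, one_mul]
  · rintro x ⟨hx1, hx2, hx3⟩ y ⟨hy1, hy2, hy3⟩ hxy a b ha hb hab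
    obtain ⟨d0, hd0⟩ : ∃ d, x d ≠ y d := by
      by_contra h; push_neg at h; exact hxy (funext h)
    obtain ⟨i0, hi0⟩ : ∃ i, x d0 i ≠ y d0 i := by
      by_contra h; push_neg at h; exact hd0 (funext h)
    have hi0m : i0 ∈ Id d0 := by
      by_contra h; exact hi0 (by rw [hx2 d0 i0 h, hy2 d0 i0 h])
    -- linear combination of sums
    have hL : ∀ i : I, (∑ d ∈ Finset.univ.filter (fun d => i ∈ Id d), (a • x + b • y) d i)
        = a * (∑ d ∈ Finset.univ.filter (fun d => i ∈ Id d), x d i)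
          + b * (∑ d ∈ Finset.univ.filter (fun d => i ∈ Id d), y d i) := by
      intro i
      simp only [Pi.add_apply, Pi.smul_apply, smul_eq_mul]
      rw [Finset.sum_add_distrib, ← Finset.mul_sum, ← Finset.mul_sum]
    -- integral term
    have h1 : a * (∑ i, ∫ s in (0:ℝ)..(∑ d ∈ Finset.univ.filter (fun d => i ∈ Id d), x d i), V i s)
        + b * (∑ i, ∫ s in (0:ℝ)..(∑ d ∈ Finset.univ.filter (fun d => i ∈ Id d), y d i), V i s)
        ≤ ∑ i, ∫ s in (0:ℝ)..(∑ d ∈ Finset.univ.filter (fun d => i ∈ Id d), (a • x + b • y) d i), V i s := by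
      rw [Finset.mul_sum, Finset.mul_sum, ← Finset.sum_add_distrib]
      refine Finset.sum_le_sum fun i _ => ?_
      rw [hL i]
      have := (hF i).2 (Set.mem_univ (∑ d ∈ Finset.univ.filter (fun d => i ∈ Id d), x d i))
        (Set.mem_univ (∑ d ∈ Finset.univ.filter (fun d => i ∈ Id d), y d i)) ha.le hb.le hab
      simpa using this
    -- linear term
    have h2 : (∑ d, ∑ i ∈ Id d, θ d i * ((a • x + b • y) d i))
        = a * (∑ d, ∑ i ∈ Id d, θ d i * x d i) + b * (∑ d, ∑ i ∈ Id d, θ d i * y d i) := by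
      rw [Finset.mul_sum, Finset.mul_sum, ← Finset.sum_add_distrib]
      refine Finset.sum_congr rfl fun d _ => ?_
      rw [Finset.mul_sum, Finset.mul_sum, ← Finset.sum_add_distrib]
      refine Finset.sum_congr rfl fun i _ => ?_
      simp only [Pi.add_apply, Pi.smul_apply, smul_eq_mul]; ring
    -- entropy term
    have h3 : (∑ d, ∑ i ∈ Id d, r d * negentropy ((a • x + b • y) d i / r d))
        < a * (∑ d, ∑ i ∈ Id d, r d * negentropy (x d i / r d))
          + b * (∑ d, ∑ i ∈ Id d, r d * negentropy (y d i / r d)) := by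
      rw [Finset.mul_sum, Finset.mul_sum, ← Finset.sum_add_distrib]
      refine Finset.sum_lt_sum (fun d _ => ?_) ⟨d0, Finset.mem_univ d0, ?_⟩
      · rw [Finset.mul_sum, Finset.mul_sum, ← Finset.sum_add_distrib]
        refine Finset.sum_le_sum fun i hi => ?_
        have hz : (a • x + b • y) d i = a * x d i + b * y d i := by
          simp [Pi.add_apply, Pi.smul_apply, smul_eq_mul]
        rw [hz]
        exact key_le (hr d) (hx1 d i hi) (hy1 d i hi) ha.le hb.le hab
      · rw [Finset.mul_sum, Finset.mul_sum, ← Finset.sum_add_distrib]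
        refine Finset.sum_lt_sum (fun i hi => ?_) ⟨i0, hi0m, ?_⟩
        · have hz : (a • x + b • y) d0 i = a * x d0 i + b * y d0 i := by
            simp [Pi.add_apply, Pi.smul_apply, smul_eq_mul]
          rw [hz]
          exact key_le (hr d0) (hx1 d0 i hi) (hy1 d0 i hi) ha.le hb.le hab
        · have hz : (a • x + b • y) d0 i0 = a * x d0 i0 + b * y d0 i0 := by
            simp [Pi.add_apply, Pi.smul_apply, smul_eq_mul]
          rw [hz]
          exact key_lt (hr d0) (hx1 d0 i0 hi0m) (hy1 d0 i0 hi0m) hi0 ha hb hab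
    simp only [J, smul_eq_mul]
    nlinarith [h1, h2, h3, mul_lt_mul_of_pos_left h3 hν]
end

section
/- Let I and D be finite nonempty sets, for each d ∈ D let I^d ⊆ I be nonempty, let ν > 0, θ_i^d ∈ ℝ, ρ^d > 0 for each d ∈ D, and for each i ∈ I let V_i : ℝ → ℝ be antitone and continuous. A family (ρ_i^d)_{d∈D, i∈I^d} with ρ_i^d > 0 and Σ_{i∈I^d} ρ_i^d = ρ^d for all d satisfies the Logit lane assignment equations ρ_i^d = ρ^d · exp((V_i(ρ_i) + θ_i^d)/ν) / Σ_{j∈I^d} exp((V_j(ρ_j) + θ_j^d)/ν) for all d ∈ D and i ∈ I^d (where ρ_i = Σ_{d : i∈I^d} ρ_i^d) if and only if it maximizes, over the set of all positive feasible families, the function J((ρ_i^d)) = Σ_{i∈I} ∫_0^{ρ_i} V_i(r) dr + Σ_{d∈D} Σ_{i∈I^d} θ_i^d ρ_i^d − ν Σ_{d∈D} Σ_{i∈I^d} ρ^d H(ρ_i^d/ρ^d). -/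
/-!
Writing `mᵈᵢ(ρ) = Vᵢ(ρᵢ) + θᵈᵢ - ν log (ρᵈᵢ / ρᵈ)` for the marginal utility of lane `i` to
origin `d`, the Logit equations say exactly that, for every `d`, the `mᵈᵢ(ρ)` with `i ∈ Iᵈ` are
all equal. The objective `J` is concave (each `Vᵢ` is antitone and `H` is convex) and
`mᵈᵢ` is its partial derivative in the coordinate `(d, i)`. So `J σ ≤ J ρ + Σ mᵈᵢ(ρ) (σᵈᵢ - ρᵈᵢ)`,
and when the marginals are constant in `i` the sum vanishes because `σᵈ` and `ρᵈ` have the same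
total. Conversely, at a maximizer, shifting mass `t` from lane `j` to lane `i` of origin `d` stays
feasible for small `|t|`, and Fermat's rule gives `mᵈᵢ(ρ) = mᵈⱼ(ρ)`.
-/

open Finset Real

lemma hasDerivAt_negentropy {x : ℝ} (hx : 0 < x) : HasDerivAt negentropy (log x) x := by
  have h : HasDerivAt (fun y => y * log y - y) (log x + 1 - 1) x :=
    (hasDerivAt_mul_log hx.ne').sub (hasDerivAt_id' x)
  convert h using 1
  · funext y
    rw [negentropy, mul_sub, mul_one]
  · ring

lemma log_mul_sub_le_negentropy_sub {a b : ℝ} (ha : 0 < a) (hb : 0 < b) :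
    log a * (b - a) ≤ negentropy b - negentropy a := by
  have h : log (a / b) ≤ a / b - 1 := log_le_sub_one_of_pos (div_pos ha hb)
  rw [log_div ha.ne' hb.ne', div_sub_one hb.ne', le_div_iff₀ hb] at h
  simp only [negentropy]
  linarith

lemma Antitone.intervalIntegral_le_mul_sub {V : ℝ → ℝ} (hV : Antitone V) (a b : ℝ) :
    ∫ s in a..b, V s ≤ V a * (b - a) := by
  rcases le_total a b with hab | hba
  · calc ∫ s in a..b, V s ≤ ∫ _ in a..b, V a :=
          intervalIntegral.integral_mono_on hab hV.intervalIntegrable intervalIntegrable_const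
            fun s hs => hV hs.1
      _ = V a * (b - a) := by simp [mul_comm]
  · have h : ∫ _ in b..a, V a ≤ ∫ s in b..a, V s :=
      intervalIntegral.integral_mono_on hba intervalIntegrable_const hV.intervalIntegrable
        fun s hs => hV hs.2
    rw [intervalIntegral.integral_symm, intervalIntegral.integral_const, smul_eq_mul] at *
    linarith

lemma eq_mul_exp_div_sum_exp_iff {ι : Type*} {s : Finset ι} {p u : ι → ℝ} {r ν : ℝ}
    (hν : ν ≠ 0) (hr : 0 < r) (hp : ∀ i ∈ s, 0 < p i) (hps : ∑ i ∈ s, p i = r) :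
    (∀ i ∈ s, p i = r * exp (u i / ν) / ∑ j ∈ s, exp (u j / ν)) ↔
      ∀ i ∈ s, ∀ j ∈ s, u i - ν * log (p i / r) = u j - ν * log (p j / r) := by
  constructor
  · intro h
    have hlog : ∀ i ∈ s, u i - ν * log (p i / r) = ν * log (∑ j ∈ s, exp (u j / ν)) := by
      intro i hi
      have hZ : 0 < ∑ j ∈ s, exp (u j / ν) := sum_pos (fun j _ => exp_pos _) ⟨i, hi⟩
      rw [h i hi, mul_div_assoc, mul_div_cancel_left₀ _ hr.ne', log_div (exp_pos _).ne' hZ.ne',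
        log_exp]
      field_simp
      ring
    intro i hi j hj
    rw [hlog i hi, hlog j hj]
  · intro h i hi
    set c := u i - ν * log (p i / r)
    have hp_eq : ∀ j ∈ s, p j = r * exp (u j / ν) / exp (c / ν) := by
      intro j hj
      have hlog : log (p j / r) = (u j - c) / ν := by
        rw [eq_div_iff hν]; linarith [h j hj i hi]
      rw [mul_div_assoc, ← exp_sub, ← sub_div, ← hlog, exp_log (div_pos (hp j hj) hr),
        mul_div_cancel₀ _ hr.ne']
    have hZ : exp (c / ν) = ∑ j ∈ s, exp (u j / ν) := by
      have h_sum := sum_congr rfl hp_eq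
      rw [hps, ← sum_div, ← mul_sum, eq_div_iff (exp_pos _).ne'] at h_sum
      exact mul_left_cancel₀ hr.ne' h_sum
    rw [hp_eq i hi, hZ]

lemma sum_mul_sub_eq_zero_of_forall_eq {ι : Type*} {s : Finset ι} {m f g : ι → ℝ}
    (hm : ∀ i ∈ s, ∀ j ∈ s, m i = m j) (hfg : ∑ i ∈ s, f i = ∑ i ∈ s, g i) :
    ∑ i ∈ s, m i * (f i - g i) = 0 := by
  rcases s.eq_empty_or_nonempty with rfl | ⟨i, hi⟩
  · simp
  · rw [sum_congr rfl fun j hj => by rw [hm j hj i hi], ← mul_sum, sum_sub_distrib, hfg,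
      sub_self, mul_zero]

open Filter Topology

section LaneAssignment

variable {D I : Type*} [Fintype D] (Id : D → Finset I) (r : D → ℝ)

def positiveFeasibleFamilies : Set (D → I → ℝ) :=
  {σ | (∀ d, ∀ i ∈ Id d, 0 < σ d i) ∧ (∀ d, ∀ i ∉ Id d, σ d i = 0) ∧
    (∀ d, ∑ i ∈ Id d, σ d i = r d)}

variable {Id r} in
lemma eventually_add_smul_mem_positiveFeasibleFamilies {ρ η : D → I → ℝ}
    (hρ : ρ ∈ positiveFeasibleFamilies Id r) (hη : ∀ d, ∀ i ∉ Id d, η d i = 0)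
    (hη_sum : ∀ d, ∑ i ∈ Id d, η d i = 0) :
    ∀ᶠ t in 𝓝 (0:ℝ), ρ + t • η ∈ positiveFeasibleFamilies Id r := by
  obtain ⟨hpos, hzero, hsum⟩ := hρ
  have hpos_near : ∀ᶠ t in 𝓝 (0:ℝ), ∀ d, ∀ i ∈ Id d, 0 < (ρ + t • η) d i := by
    refine eventually_all.mpr fun d => (eventually_all_finset _).mpr fun i hi => ?_
    have h : Tendsto (fun t : ℝ => ρ d i + t * η d i) (𝓝 0) (𝓝 (ρ d i)) :=
      (by fun_prop : Continuous fun t : ℝ => ρ d i + t * η d i).tendsto' 0 _ (by simp)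
    exact h.eventually (lt_mem_nhds (hpos d i hi))
  filter_upwards [hpos_near] with t ht
  exact ⟨ht, fun d i hi => by simp [hzero d i hi, hη d i hi],
    fun d => by simp [sum_add_distrib, ← mul_sum, hsum, hη_sum]⟩

variable [DecidableEq I] (ν : ℝ) (θ : D → I → ℝ) (V : I → ℝ → ℝ)

def load (σ : D → I → ℝ) (i : I) : ℝ := ∑ d ∈ univ.filter (fun d => i ∈ Id d), σ d i

noncomputable def marginal (σ : D → I → ℝ) (d : D) (i : I) : ℝ :=
  V i (load Id σ i) + θ d i - ν * log (σ d i / r d)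

noncomputable def objective [Fintype I] (σ : D → I → ℝ) : ℝ :=
  (∑ i, ∫ s in (0:ℝ)..load Id σ i, V i s) + (∑ d, ∑ i ∈ Id d, θ d i * σ d i)
    - ν * ∑ d, ∑ i ∈ Id d, r d * negentropy (σ d i / r d)

variable {Id r ν θ V}

lemma load_add_smul (ρ η : D → I → ℝ) (t : ℝ) (i : I) :
    load Id (ρ + t • η) i = load Id ρ i + t * load Id η i := by
  simp [load, sum_add_distrib, mul_sum]

variable [Fintype I]

lemma sum_mul_load (f : I → ℝ) (σ : D → I → ℝ) :
    ∑ i, f i * load Id σ i = ∑ d, ∑ i ∈ Id d, f i * σ d i := by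
  simp only [load, mul_sum]
  exact sum_comm' fun i d => by simp [and_comm]

lemma objective_le_add_sum_marginal_mul (hν : 0 ≤ ν) (hr : ∀ d, 0 < r d)
    (hV : ∀ i, Antitone (V i)) {ρ σ : D → I → ℝ} (hρ : ∀ d, ∀ i ∈ Id d, 0 < ρ d i)
    (hσ : ∀ d, ∀ i ∈ Id d, 0 < σ d i) :
    objective Id r ν θ V σ ≤
      objective Id r ν θ V ρ + ∑ d, ∑ i ∈ Id d, marginal Id r ν θ V ρ d i * (σ d i - ρ d i) := by
  have h_int : ∑ i, ∫ s in (0:ℝ)..load Id σ i, V i s ≤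
      (∑ i, ∫ s in (0:ℝ)..load Id ρ i, V i s)
        + ((∑ d, ∑ i ∈ Id d, V i (load Id ρ i) * σ d i)
          - ∑ d, ∑ i ∈ Id d, V i (load Id ρ i) * ρ d i) := by
    rw [← sum_mul_load, ← sum_mul_load, ← sum_sub_distrib, ← sum_add_distrib]
    refine sum_le_sum fun i _ => ?_
    have h := (hV i).intervalIntegral_le_mul_sub (load Id ρ i) (load Id σ i)
    have h_sub : (∫ s in (0:ℝ)..load Id σ i, V i s) - ∫ s in (0:ℝ)..load Id ρ i, V i s =
        ∫ s in load Id ρ i..load Id σ i, V i s :=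
      intervalIntegral.integral_interval_sub_left (hV i).intervalIntegrable
        (hV i).intervalIntegrable
    linarith
  have h_ent : ∑ d, ∑ i ∈ Id d, log (ρ d i / r d) * (σ d i - ρ d i) ≤
      (∑ d, ∑ i ∈ Id d, r d * negentropy (σ d i / r d))
        - ∑ d, ∑ i ∈ Id d, r d * negentropy (ρ d i / r d) := by
    rw [← sum_sub_distrib]
    refine sum_le_sum fun d _ => ?_
    rw [← sum_sub_distrib]
    refine sum_le_sum fun i hi => ?_
    have h := log_mul_sub_le_negentropy_sub (div_pos (hρ d i hi) (hr d))
      (div_pos (hσ d i hi) (hr d))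
    have hrd := (hr d).ne'
    calc log (ρ d i / r d) * (σ d i - ρ d i)
        = r d * (log (ρ d i / r d) * (σ d i / r d - ρ d i / r d)) := by field_simp
      _ ≤ r d * (negentropy (σ d i / r d) - negentropy (ρ d i / r d)) := by gcongr; exact (hr d).le
      _ = _ := mul_sub _ _ _
  have h_ent' := mul_le_mul_of_nonneg_left h_ent hν
  simp only [objective, marginal, sub_mul, add_mul, sum_add_distrib, sum_sub_distrib, mul_sub,
    mul_assoc, ← mul_sum] at h_ent' ⊢
  linarith

lemma isMaxOn_objective_of_marginal_eq (hν : 0 ≤ ν) (hr : ∀ d, 0 < r d)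
    (hV : ∀ i, Antitone (V i)) {ρ : D → I → ℝ} (hρ : ρ ∈ positiveFeasibleFamilies Id r)
    (hm : ∀ d, ∀ i ∈ Id d, ∀ j ∈ Id d, marginal Id r ν θ V ρ d i = marginal Id r ν θ V ρ d j) :
    IsMaxOn (objective Id r ν θ V) (positiveFeasibleFamilies Id r) ρ := by
  refine isMaxOn_iff.mpr fun σ ⟨hσ, _, hσsum⟩ => ?_
  calc objective Id r ν θ V σ
      ≤ objective Id r ν θ V ρ + ∑ d, ∑ i ∈ Id d, marginal Id r ν θ V ρ d i * (σ d i - ρ d i) :=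
        objective_le_add_sum_marginal_mul hν hr hV hρ.1 hσ
    _ = objective Id r ν θ V ρ := by
        rw [sum_eq_zero fun d _ => sum_mul_sub_eq_zero_of_forall_eq (hm d)
          ((hσsum d).trans (hρ.2.2 d).symm), add_zero]

lemma hasDerivAt_objective_add_smul (hr : ∀ d, 0 < r d) (hVc : ∀ i, Continuous (V i))
    {ρ η : D → I → ℝ} (hρ : ∀ d, ∀ i ∈ Id d, 0 < ρ d i) :
    HasDerivAt (fun t : ℝ => objective Id r ν θ V (ρ + t • η))
      (∑ d, ∑ i ∈ Id d, marginal Id r ν θ V ρ d i * η d i) 0 := by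
  have hline : ∀ a b : ℝ, HasDerivAt (fun t : ℝ => a + t * b) b 0 := fun a b => by
    simpa using ((hasDerivAt_id (0:ℝ)).mul_const b).const_add a
  have h_int : ∀ i, HasDerivAt (fun t : ℝ => ∫ s in (0:ℝ)..load Id (ρ + t • η) i, V i s)
      (V i (load Id ρ i) * load Id η i) 0 := fun i => by
    simp only [load_add_smul]
    exact ((hVc i).integral_hasStrictDerivAt 0 _).hasDerivAt.comp_of_eq 0
      (hline _ _) (by simp)
  have h_lin : ∀ d i, HasDerivAt (fun t : ℝ => θ d i * (ρ + t • η) d i) (θ d i * η d i) 0 :=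
    fun d i => (hline _ _).const_mul _
  have h_ent : ∀ d, ∀ i ∈ Id d, HasDerivAt
      (fun t : ℝ => r d * negentropy ((ρ + t • η) d i / r d)) (log (ρ d i / r d) * η d i) 0 := by
    intro d i hi
    have h := ((hasDerivAt_negentropy (div_pos (hρ d i hi) (hr d))).comp_of_eq 0
      ((hline (ρ d i) (η d i)).div_const (r d)) (by simp)).const_mul (r d)
    exact h.congr_deriv (by field_simp [(hr d).ne'])
  have h : HasDerivAt (fun t : ℝ => objective Id r ν θ V (ρ + t • η))
      ((∑ i, V i (load Id ρ i) * load Id η i) + (∑ d, ∑ i ∈ Id d, θ d i * η d i)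
        - ν * ∑ d, ∑ i ∈ Id d, log (ρ d i / r d) * η d i) 0 :=
    ((HasDerivAt.fun_sum (u := univ) fun i _ => h_int i).add
      (HasDerivAt.fun_sum (u := univ) fun d _ => HasDerivAt.fun_sum (u := Id d)
        fun i _ => h_lin d i)).sub
      ((HasDerivAt.fun_sum (u := univ) fun d _ => HasDerivAt.fun_sum (u := Id d)
        fun i hi => h_ent d i hi).const_mul ν)
  refine h.congr_deriv ?_
  simp only [marginal, add_mul, sub_mul, sum_add_distrib, sum_sub_distrib, sum_mul_load,
    mul_sum, mul_assoc]

lemma sum_marginal_mul_eq_zero_of_isMaxOn (hr : ∀ d, 0 < r d) (hVc : ∀ i, Continuous (V i))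
    {ρ η : D → I → ℝ} (hρ : ρ ∈ positiveFeasibleFamilies Id r)
    (hmax : IsMaxOn (objective Id r ν θ V) (positiveFeasibleFamilies Id r) ρ)
    (hη : ∀ d, ∀ i ∉ Id d, η d i = 0) (hη_sum : ∀ d, ∑ i ∈ Id d, η d i = 0) :
    ∑ d, ∑ i ∈ Id d, marginal Id r ν θ V ρ d i * η d i = 0 := by
  refine IsLocalMax.hasDerivAt_eq_zero ?_ (hasDerivAt_objective_add_smul hr hVc hρ.1)
  filter_upwards [eventually_add_smul_mem_positiveFeasibleFamilies hρ hη hη_sum] with t ht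
  simpa using isMaxOn_iff.mp hmax _ ht

lemma marginal_eq_of_isMaxOn (hr : ∀ d, 0 < r d) (hVc : ∀ i, Continuous (V i))
    {ρ : D → I → ℝ} (hρ : ρ ∈ positiveFeasibleFamilies Id r)
    (hmax : IsMaxOn (objective Id r ν θ V) (positiveFeasibleFamilies Id r) ρ)
    {d : D} {i j : I} (hi : i ∈ Id d) (hj : j ∈ Id d) :
    marginal Id r ν θ V ρ d i = marginal Id r ν θ V ρ d j := by
  classical
  let η : D → I → ℝ := fun δ k =>
    if δ = d then (if k = i then 1 else 0) - (if k = j then 1 else 0) else 0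
  have h := sum_marginal_mul_eq_zero_of_isMaxOn hr hVc hρ hmax (η := η) ?_ ?_
  · simp [η, mul_sub, sum_sub_distrib, hi, hj] at h
    linarith
  · intro δ k hk
    by_cases hδ : δ = d
    · subst hδ
      simp [η, (ne_of_mem_of_not_mem hi hk).symm, (ne_of_mem_of_not_mem hj hk).symm]
    · simp [η, hδ]
  · intro δ
    by_cases hδ : δ = d <;> simp [η, hδ, sum_sub_distrib, hi, hj]

end LaneAssignment

theorem logit_equations_iff_max_general
    (I D : Type*) [Fintype I] [Fintype D] [DecidableEq I]
    (Id : D → Finset I)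
    (ν : ℝ) (hν : 0 < ν) (θ : D → I → ℝ) (r : D → ℝ) (hr : ∀ d, 0 < r d)
    (V : I → ℝ → ℝ) (hV : ∀ i, Antitone (V i)) (hVc : ∀ i, Continuous (V i))
    (S : Set (D → I → ℝ))
    (hS : S = {σ | (∀ d, ∀ i ∈ Id d, 0 < σ d i) ∧ (∀ d, ∀ i ∉ Id d, σ d i = 0) ∧
                   (∀ d, ∑ i ∈ Id d, σ d i = r d)})
    (J : (D → I → ℝ) → ℝ)
    (hJ : J = fun σ =>
      (∑ i, ∫ s in (0:ℝ)..(∑ d ∈ Finset.univ.filter (fun d => i ∈ Id d), σ d i), V i s)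
      + (∑ d, ∑ i ∈ Id d, θ d i * σ d i)
      - ν * ∑ d, ∑ i ∈ Id d, r d * negentropy (σ d i / r d))
    (ρ : D → I → ℝ) (hρ : ρ ∈ S) :
    (∀ d, ∀ i ∈ Id d,
        ρ d i = r d *
          Real.exp ((V i (∑ δ ∈ Finset.univ.filter (fun δ => i ∈ Id δ), ρ δ i) + θ d i) / ν) /
          ∑ j ∈ Id d,
            Real.exp ((V j (∑ δ ∈ Finset.univ.filter (fun δ => j ∈ Id δ), ρ δ j) + θ d j) / ν))
      ↔ (∀ σ ∈ S, J σ ≤ J ρ) := by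
  subst hS hJ
  change ρ ∈ positiveFeasibleFamilies Id r at hρ
  change _ ↔ IsMaxOn (objective Id r ν θ V) (positiveFeasibleFamilies Id r) ρ
  refine (forall_congr' fun d => eq_mul_exp_div_sum_exp_iff hν.ne' (hr d) (hρ.1 d) (hρ.2.2 d)).trans
    ⟨isMaxOn_objective_of_marginal_eq hν.le hr hV hρ,
      fun hmax d i hi j hj => marginal_eq_of_isMaxOn hr hVc hρ hmax hi hj⟩

/-- A positive feasible family satisfies the Logit lane assignment equations
iff it maximizes the Beckmann-type objective `J` over all positive feasible families.
Families are encoded as `ρ : D → I → ℝ` vanishing off the accessibility graph. -/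
theorem logit_equations_iff_max
    (I D : Type*) [Fintype I] [Fintype D] [Nonempty I] [Nonempty D] [DecidableEq I]
    (Id : D → Finset I) (hId : ∀ d, (Id d).Nonempty)
    (ν : ℝ) (hν : 0 < ν) (θ : D → I → ℝ) (r : D → ℝ) (hr : ∀ d, 0 < r d)
    (V : I → ℝ → ℝ) (hV : ∀ i, Antitone (V i)) (hVc : ∀ i, Continuous (V i))
    (S : Set (D → I → ℝ))
    (hS : S = {σ | (∀ d, ∀ i ∈ Id d, 0 < σ d i) ∧ (∀ d, ∀ i ∉ Id d, σ d i = 0) ∧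
                   (∀ d, ∑ i ∈ Id d, σ d i = r d)})
    (J : (D → I → ℝ) → ℝ)
    (hJ : J = fun σ =>
      (∑ i, ∫ s in (0:ℝ)..(∑ d ∈ Finset.univ.filter (fun d => i ∈ Id d), σ d i), V i s)
      + (∑ d, ∑ i ∈ Id d, θ d i * σ d i)
      - ν * ∑ d, ∑ i ∈ Id d, r d * negentropy (σ d i / r d))
    (ρ : D → I → ℝ) (hρ : ρ ∈ S) :
    (∀ d, ∀ i ∈ Id d,
        ρ d i = r d *
          Real.exp ((V i (∑ δ ∈ Finset.univ.filter (fun δ => i ∈ Id δ), ρ δ i) + θ d i) / ν) /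
          ∑ j ∈ Id d,
            Real.exp ((V j (∑ δ ∈ Finset.univ.filter (fun δ => j ∈ Id δ), ρ δ j) + θ d j) / ν))
      ↔ (∀ σ ∈ S, J σ ≤ J ρ) :=
  logit_equations_iff_max_general I D Id ν hν θ r hr V hV hVc S hS J hJ ρ hρ
end

section
/- Let I and D be finite nonempty sets, let ν > 0, θ_i^d ∈ ℝ, ρ^d > 0, and let (ρ_i^d)_{d∈D, i∈I} be positive reals with Σ_{i∈I} ρ_i^d = ρ^d satisfying the Logit lane assignment equations ρ_i^d = ρ^d · exp((v_i + θ_i^d)/ν) / Σ_{k∈I} exp((v_k + θ_k^d)/ν) for given reals (v_i)_{i∈I} (every class has access to every lane). Then for all lanes i, j ∈ I, setting ρ_i = Σ_{d∈D} ρ_i^d and ρ̂_{j,i} = Σ_{d∈D} ρ_j^d · exp((θ_i^d − θ_j^d)/ν), one has ν · ln(ρ_i / ρ̂_{j,i}) = v_i − v_j. -/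
open Finset Real

/-- The heterogeneous lane-ratio identity: under the Logit lane assignment model
(with every class having access to every lane),
`ν ln (ρ_i / ρ̂_{j,i}) = v_i - v_j`, where
`ρ̂_{j,i} = ∑ d, ρ_j^d exp((θ_i^d - θ_j^d)/ν)`. -/
theorem logit_heterogeneous_lane_ratio
    (I D : Type*) [Fintype I] [Fintype D] [Nonempty I] [Nonempty D]
    (ν : ℝ) (hν : 0 < ν) (θ : D → I → ℝ) (r : D → ℝ) (hr : ∀ d, 0 < r d)
    (ρ : D → I → ℝ) (hρpos : ∀ d i, 0 < ρ d i)
    (hρsum : ∀ d, ∑ i, ρ d i = r d) (v : I → ℝ)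
    (hlogit : ∀ d i,
      ρ d i = r d * Real.exp ((v i + θ d i) / ν) /
        ∑ k, Real.exp ((v k + θ d k) / ν)) :
    ∀ i j : I,
      ν * Real.log ((∑ d, ρ d i) / ∑ d, ρ d j * Real.exp ((θ d i - θ d j) / ν))
        = v i - v j := by
  intro i j
  have key : ∀ d, ρ d j * Real.exp ((θ d i - θ d j) / ν)
      = ρ d i * Real.exp ((v j - v i) / ν) := by
    intro d
    have hS : (∑ k, Real.exp ((v k + θ d k) / ν)) ≠ 0 := by
      positivity
    rw [hlogit d i, hlogit d j]
    field_simp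
    rw [mul_assoc, mul_assoc, ← Real.exp_add, ← Real.exp_add]
    ring_nf
  have hsum : (∑ d, ρ d j * Real.exp ((θ d i - θ d j) / ν))
      = (∑ d, ρ d i) * Real.exp ((v j - v i) / ν) := by
    rw [Finset.sum_mul]
    exact Finset.sum_congr rfl fun d _ => key d
  have hpos : 0 < ∑ d, ρ d i := Finset.sum_pos (fun d _ => hρpos d i) Finset.univ_nonempty
  rw [hsum]
  have : (∑ d, ρ d i) / ((∑ d, ρ d i) * Real.exp ((v j - v i) / ν))
      = Real.exp ((v i - v j) / ν) := by
    rw [div_mul_eq_div_div, div_self hpos.ne', one_div, ← Real.exp_neg]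
    ring_nf
  rw [this, Real.log_exp]
  field_simp
end

section
/- Let I be a finite nonempty set, let v : I → ℝ and ν > 0. Let (ξ_i)_{i∈I} be independent, identically distributed real random variables with the standard Gumbel law, i.e. with cumulative distribution function x ↦ exp(−exp(−x)) (equivalently, with density x ↦ exp(−x)·exp(−exp(−x)) with respect to Lebesgue measure). Define the random utilities U_i = v_i + ν·ξ_i. Then for every i ∈ I, the probability that U_i > U_j for all j ≠ i equals exp(v_i/ν) / Σ_{j∈I} exp(v_j/ν). -/
/-!
With `w = v / ν`, `U j < U i` iff `ξ j + w j < ξ i + w i`. Given `ξ i = x`, the other `ξ j`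
independently fall below `x + w i - w j`, each with probability `exp (-e^{-x} e^{w j - w i})`.
The Gumbel density `e^{-x} exp (-e^{-x})` is `e^{-x}` times the `j = i` factor of this product,
so the integrand is `e^{-x} exp (-S e^{-x})` with `S = ∑ j, e^{w j - w i}`, and the substitution
`u = e^{-x}` turns its integral into `∫_{u > 0} e^{-S u} du = 1 / S`.
-/

open Finset Real MeasureTheory ProbabilityTheory

/-- The standard Gumbel measure on `ℝ`, with density `x ↦ e^{-x} e^{-e^{-x}}`
with respect to Lebesgue measure (its cdf is `x ↦ exp (-exp (-x))`). -/
noncomputable def gumbelMeasure : Measure ℝ :=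
  volume.withDensity fun x => ENNReal.ofReal (Real.exp (-x) * Real.exp (-Real.exp (-x)))

open Set
open scoped ENNReal

lemma image_exp_neg_univ : (fun x : ℝ => exp (-x)) '' univ = Set.Ioi 0 := by
  rw [image_univ, ← range_exp]
  exact (Function.LeftInverse.surjective neg_neg).range_comp exp

lemma image_exp_neg_Iio (a : ℝ) :
    (fun x : ℝ => exp (-x)) '' Set.Iio a = Set.Ioi (exp (-a)) := by
  rw [← image_exp_Ioi, ← image_neg_Iio, image_image]

lemma setLIntegral_exp_neg_mul_comp_exp_neg {s : Set ℝ} (hs : MeasurableSet s)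
    (g : ℝ → ℝ≥0∞) :
    ∫⁻ x in s, ENNReal.ofReal (exp (-x)) * g (exp (-x))
      = ∫⁻ u in (fun x => exp (-x)) '' s, g u := by
  rw [lintegral_image_eq_lintegral_deriv_mul_of_antitoneOn hs
    (fun x _ => (hasDerivAt_neg x).exp.hasDerivWithinAt)
    (fun x _ y _ hxy => exp_le_exp.2 (neg_le_neg hxy))]
  simp

lemma lintegral_Ioi_exp_neg_mul {S : ℝ} (hS : 0 < S) (r : ℝ) :
    ∫⁻ u in Set.Ioi r, ENNReal.ofReal (exp (-(S * u)))
      = ENNReal.ofReal (exp (-(S * r)) / S) := by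
  simp_rw [← neg_mul]
  rw [← ofReal_integral_eq_lintegral_ofReal (integrableOn_exp_mul_Ioi (neg_neg_of_pos hS) r)
    (ae_of_all _ fun _ => (exp_pos _).le), integral_exp_mul_Ioi (neg_neg_of_pos hS)]
  congr 1
  ring

lemma setLIntegral_exp_neg_mul_exp_neg_mul_exp_neg {S : ℝ} (hS : 0 < S) {s : Set ℝ}
    (hs : MeasurableSet s) {r : ℝ} (hsr : (fun x => exp (-x)) '' s = Set.Ioi r) :
    ∫⁻ x in s, ENNReal.ofReal (exp (-x) * exp (-(S * exp (-x))))
      = ENNReal.ofReal (exp (-(S * r)) / S) := by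
  simp_rw [ENNReal.ofReal_mul (exp_pos _).le]
  rw [setLIntegral_exp_neg_mul_comp_exp_neg hs (fun u => ENNReal.ofReal (exp (-(S * u)))), hsr,
    lintegral_Ioi_exp_neg_mul hS]

lemma lintegral_exp_neg_mul_exp_neg_mul_exp_neg {S : ℝ} (hS : 0 < S) :
    ∫⁻ x, ENNReal.ofReal (exp (-x) * exp (-(S * exp (-x)))) = ENNReal.ofReal (1 / S) := by
  simpa using
    setLIntegral_exp_neg_mul_exp_neg_mul_exp_neg hS MeasurableSet.univ image_exp_neg_univ

lemma gumbelMeasure_Iio (a : ℝ) :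
    gumbelMeasure (Set.Iio a) = ENNReal.ofReal (exp (-exp (-a))) := by
  rw [gumbelMeasure, withDensity_apply _ measurableSet_Iio]
  simpa using setLIntegral_exp_neg_mul_exp_neg_mul_exp_neg one_pos measurableSet_Iio
    (image_exp_neg_Iio a)

lemma prod_exp_neg_exp_neg_add {ι : Type*} (s : Finset ι) (c : ι → ℝ) (x : ℝ) :
    ∏ j ∈ s, exp (-exp (-(x + c j))) = exp (-((∑ j ∈ s, exp (-c j)) * exp (-x))) := by
  rw [← exp_sum, sum_mul, ← sum_neg_distrib]
  congr! 3 with j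
  rw [← exp_add]
  ring_nf

theorem ProbabilityTheory.iIndepFun.measure_forall_lt_add {Ω ι : Type*} [MeasurableSpace Ω]
    {P : Measure Ω} [IsProbabilityMeasure P] [Fintype ι] [DecidableEq ι] {ξ : ι → Ω → ℝ}
    (hmeas : ∀ j, Measurable (ξ j)) (hindep : iIndepFun ξ P) (i : ι) (c : ι → ℝ) :
    P {ω | ∀ j, j ≠ i → ξ j ω < ξ i ω + c j}
      = ∫⁻ x, ∏ j ∈ univ.erase i, P.map (ξ j) (Set.Iio (x + c j)) ∂P.map (ξ i) := by
  let T := {j // j ≠ i}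
  let Y : Ω → T → ℝ := fun ω j => ξ j ω
  have hY : Measurable Y := measurable_pi_lambda _ fun j => hmeas j
  have hlawY : P.map Y = Measure.pi fun j : T => P.map (ξ j) :=
    (hindep.precomp Subtype.val_injective).map_fun_eq_pi_map fun j => (hmeas j).aemeasurable
  have hindepY : IndepFun (ξ i) Y P := by
    have h := hindep.indepFun_finset {i} (univ.erase i) (by simp) hmeas
    exact h.comp (measurable_pi_apply (⟨i, mem_singleton_self i⟩ : ({i} : Finset ι)))
      (measurable_pi_lambda (fun x (j : T) => x ⟨j, by simp [j.2]⟩)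
        fun _ => measurable_pi_apply _)
  let E : Set (ℝ × (T → ℝ)) := {p | ∀ j, p.2 j < p.1 + c j}
  have hE : MeasurableSet E := by
    simp only [E, ofPred_forall]
    exact .iInter fun j => measurableSet_lt measurable_snd.eval (measurable_fst.add_const _)
  have hpre :
      {ω | ∀ j, j ≠ i → ξ j ω < ξ i ω + c j} = (fun ω => (ξ i ω, Y ω)) ⁻¹' E := by
    ext ω
    simp [E, Y, T]
  have hslice (x : ℝ) : Prod.mk x ⁻¹' E = Set.univ.pi fun j : T => Set.Iio (x + c j) := by
    ext y
    simp [E]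
  rw [hpre, ← Measure.map_apply ((hmeas i).prodMk hY) hE,
    (indepFun_iff_map_prod_eq_prod_map_map (hmeas i).aemeasurable hY.aemeasurable).1 hindepY,
    Measure.prod_apply hE, hlawY]
  simp_rw [hslice, Measure.pi_pi]
  congr! 2 with x
  exact (prod_subtype (univ.erase i) (by simp)
    fun j => P.map (ξ j) (Set.Iio (x + c j))).symm

theorem ProbabilityTheory.iIndepFun.measure_forall_add_lt_add_of_gumbel {Ω ι : Type*}
    [MeasurableSpace Ω] {P : Measure Ω} [IsProbabilityMeasure P] [Fintype ι] [DecidableEq ι]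
    {ξ : ι → Ω → ℝ}
    (hmeas : ∀ j, Measurable (ξ j)) (hindep : iIndepFun ξ P)
    (hlaw : ∀ j, P.map (ξ j) = gumbelMeasure) (w : ι → ℝ) (i : ι) :
    P {ω | ∀ j, j ≠ i → ξ j ω + w j < ξ i ω + w i}
      = ENNReal.ofReal (exp (w i) / ∑ j, exp (w j)) := by
  set c : ι → ℝ := fun j => w i - w j
  set S := ∑ j, exp (-c j)
  have hS : 0 < S := sum_pos (fun j _ => exp_pos _) ⟨i, mem_univ i⟩
  have hdensity (x : ℝ) :
      ENNReal.ofReal (exp (-x) * exp (-exp (-x)))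
          * ∏ j ∈ univ.erase i, ENNReal.ofReal (exp (-exp (-(x + c j))))
        = ENNReal.ofReal (exp (-x) * exp (-(S * exp (-x)))) := by
    have hci : exp (-exp (-x)) = exp (-exp (-(x + c i))) := by simp [c]
    rw [← ENNReal.ofReal_prod_of_nonneg (fun j _ => (exp_pos _).le),
      ← ENNReal.ofReal_mul (by positivity), mul_assoc, hci,
      mul_prod_erase _ (fun j => exp (-exp (-(x + c j)))) (mem_univ i), prod_exp_neg_exp_neg_add]
  have hset : {ω | ∀ j, j ≠ i → ξ j ω + w j < ξ i ω + w i}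
      = {ω | ∀ j, j ≠ i → ξ j ω < ξ i ω + c j} := by
    ext ω
    simp only [mem_ofPred_eq, c, ← add_sub_assoc, lt_sub_iff_add_lt]
  rw [hset, hindep.measure_forall_lt_add hmeas i c]
  simp_rw [hlaw, gumbelMeasure_Iio]
  rw [gumbelMeasure, lintegral_withDensity_eq_lintegral_mul _ (by fun_prop) (by fun_prop)]
  simp only [Pi.mul_apply, hdensity, lintegral_exp_neg_mul_exp_neg_mul_exp_neg hS]
  congr 1
  simp only [S, c, neg_sub, exp_sub, ← sum_div, one_div_div]

theorem gumbel_max_gives_logit_general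
    (I : Type*) [Fintype I] [DecidableEq I]
    (v : I → ℝ) (ν : ℝ) (hν : 0 < ν)
    (Ω : Type*) [MeasurableSpace Ω] (P : Measure Ω) [IsProbabilityMeasure P]
    (ξ : I → Ω → ℝ) (hmeas : ∀ i, Measurable (ξ i))
    (hindep : iIndepFun ξ P)
    (hlaw : ∀ i, P.map (ξ i) = gumbelMeasure)
    (U : I → Ω → ℝ) (hU : ∀ i ω, U i ω = v i + ν * ξ i ω) (i : I) :
    P {ω | ∀ j : I, j ≠ i → U j ω < U i ω}
      = ENNReal.ofReal (Real.exp (v i / ν) / ∑ j, Real.exp (v j / ν)) := by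
  have hU' (j : I) (ω : Ω) : U j ω = ν * (ξ j ω + v j / ν) := by
    rw [hU, mul_add, mul_div_cancel₀ _ hν.ne']
    ring
  simp_rw [hU', mul_lt_mul_iff_right₀ hν]
  exact hindep.measure_forall_add_lt_add_of_gumbel hmeas hlaw (fun j => v j / ν) i

/-- Probabilistic foundation of the Logit model: if the random utilities are
`U i = v i + ν ξ i` with `(ξ i)` i.i.d. standard Gumbel, then the probability
that alternative `i` has the strictly highest utility is the softmax
`exp (v i / ν) / ∑ j, exp (v j / ν)`. -/
theorem gumbel_max_gives_logit
    (I : Type*) [Fintype I] [Nonempty I] [DecidableEq I]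
    (v : I → ℝ) (ν : ℝ) (hν : 0 < ν)
    (Ω : Type*) [MeasurableSpace Ω] (P : Measure Ω) [IsProbabilityMeasure P]
    (ξ : I → Ω → ℝ) (hmeas : ∀ i, Measurable (ξ i))
    (hindep : iIndepFun ξ P)
    (hlaw : ∀ i, P.map (ξ i) = gumbelMeasure)
    (U : I → Ω → ℝ) (hU : ∀ i ω, U i ω = v i + ν * ξ i ω) (i : I) :
    P {ω | ∀ j : I, j ≠ i → U j ω < U i ω}
      = ENNReal.ofReal (Real.exp (v i / ν) / ∑ j, Real.exp (v j / ν)) :=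
  gumbel_max_gives_logit_general I v ν hν Ω P ξ hmeas hindep hlaw U hU i
end

section
/- Let V_1, V_2 : ℝ → ℝ be antitone and continuous, let θ > 0, and let a > 0, b > 0. Then the equation φ = exp(θ·V_1(a·φ)) / (exp(θ·V_1(a·φ)) + exp(θ·V_2(b·(1 − φ)))) has exactly one solution φ in the open interval (0, 1). -/
open Real

/-- The one-dimensional Logit fixed-point equation of the two-lane, two-class
ring-road example has exactly one solution `φ` in the open interval `(0, 1)`. -/
theorem logit_split_fixed_point_existsUnique
    (V₁ V₂ : ℝ → ℝ) (hV₁ : Antitone V₁) (hV₂ : Antitone V₂)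
    (hV₁c : Continuous V₁) (hV₂c : Continuous V₂)
    (θ : ℝ) (hθ : 0 < θ) (a b : ℝ) (ha : 0 < a) (hb : 0 < b) :
    ∃! φ : ℝ, φ ∈ Set.Ioo (0:ℝ) 1 ∧
      φ = Real.exp (θ * V₁ (a * φ)) /
        (Real.exp (θ * V₁ (a * φ)) + Real.exp (θ * V₂ (b * (1 - φ)))) := by
  classical
  let A : ℝ → ℝ := fun φ => Real.exp (θ * V₁ (a * φ))
  let B : ℝ → ℝ := fun φ => Real.exp (θ * V₂ (b * (1 - φ)))
  have hApos : ∀ φ, 0 < A φ := fun φ => Real.exp_pos _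
  have hBpos : ∀ φ, 0 < B φ := fun φ => Real.exp_pos _
  have hden : ∀ φ, 0 < A φ + B φ := fun φ => add_pos (hApos φ) (hBpos φ)
  let g : ℝ → ℝ := fun φ => A φ / (A φ + B φ)
  have hAanti : Antitone A := by
    intro x y hxy
    exact Real.exp_le_exp.2 (mul_le_mul_of_nonneg_left
      (hV₁ (mul_le_mul_of_nonneg_left hxy ha.le)) hθ.le)
  have hBmono : Monotone B := by
    intro x y hxy
    exact Real.exp_le_exp.2 (mul_le_mul_of_nonneg_left
      (hV₂ (mul_le_mul_of_nonneg_left (by linarith) hb.le)) hθ.le)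
  have hganti : Antitone g := by
    intro x y hxy
    show A y / (A y + B y) ≤ A x / (A x + B x)
    rw [div_le_div_iff₀ (hden y) (hden x)]
    have h1 := hAanti hxy
    have h2 := hBmono hxy
    nlinarith [hApos x, hApos y, hBpos x, hBpos y]
  have hg0 : ∀ φ, 0 < g φ := fun φ => div_pos (hApos φ) (hden φ)
  have hg1 : ∀ φ, g φ < 1 := fun φ =>
    (div_lt_one (hden φ)).2 (by linarith [hBpos φ])
  let f : ℝ → ℝ := fun φ => φ - g φ
  have hfmono : StrictMono f := by
    intro x y h
    have := hganti h.le
    show x - g x < y - g y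
    linarith
  have hAc : Continuous A :=
    Real.continuous_exp.comp (continuous_const.mul (hV₁c.comp (continuous_const.mul continuous_id)))
  have hBc : Continuous B :=
    Real.continuous_exp.comp (continuous_const.mul
      (hV₂c.comp (continuous_const.mul (continuous_const.sub continuous_id))))
  have hgc : Continuous g := hAc.div (hAc.add hBc) (fun φ => (hden φ).ne')
  have hfc : Continuous f := continuous_id.sub hgc
  have hf0 : f 0 < 0 := by
    have := hg0 0
    show (0:ℝ) - g 0 < 0
    linarith
  have hf1 : 0 < f 1 := by
    have := hg1 1
    show (0:ℝ) < 1 - g 1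
    linarith
  have hmem : (0:ℝ) ∈ Set.Ioo (f 0) (f 1) := ⟨hf0, hf1⟩
  obtain ⟨c, hc, hfc0⟩ :=
    intermediate_value_Ioo (by norm_num : (0:ℝ) ≤ 1) hfc.continuousOn hmem
  have key : ∀ φ : ℝ, (φ = g φ) ↔ f φ = 0 := by
    intro φ
    constructor
    · intro h; show φ - g φ = 0; linarith [h]
    · intro h; have : φ - g φ = 0 := h; linarith
  refine ⟨c, ⟨hc, ?_⟩, ?_⟩
  · exact (key c).2 hfc0
  · rintro y ⟨hy, hyeq⟩
    have : f y = 0 := (key y).1 hyeq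
    exact hfmono.injective (by rw [this, hfc0])
end

section
/- Let ν > 0 and let V_1, V_2 : ℝ → ℝ be infinitely differentiable with V_1' ≤ 0 and V_2' ≤ 0 everywhere. Then there exists an infinitely differentiable function R : (0, ∞) → ℝ such that for every ρ > 0 one has 0 < R(ρ) < ρ and R(ρ) = ρ · exp(V_1(R(ρ))/ν) / (exp(V_1(R(ρ))/ν) + exp(V_2(ρ − R(ρ))/ν)); moreover for each ρ > 0 the value R(ρ) is the unique x ∈ (0, ρ) satisfying x = ρ · exp(V_1(x)/ν) / (exp(V_1(x)/ν) + exp(V_2(ρ − x)/ν)). -/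
open Real Filter


lemma logit_eq_iff (ν : ℝ) (hν : 0 < ν) (V₁ V₂ : ℝ → ℝ) {ρ x : ℝ}
    (hx : 0 < x) (hxρ : x < ρ) :
    (x = ρ * Real.exp (V₁ x / ν) /
        (Real.exp (V₁ x / ν) + Real.exp (V₂ (ρ - x) / ν))) ↔
      ν * Real.log x - ν * Real.log (ρ - x) + V₂ (ρ - x) - V₁ x = 0 := by
  set a := Real.exp (V₁ x / ν) with ha_def
  set b := Real.exp (V₂ (ρ - x) / ν) with hb_def
  have ha : 0 < a := Real.exp_pos _
  have hb : 0 < b := Real.exp_pos _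
  have hab : a + b ≠ 0 := by positivity
  have hρx : 0 < ρ - x := by linarith
  rw [eq_div_iff hab]
  have h1 : x * (a + b) = ρ * a ↔ x * b = (ρ - x) * a := by
    constructor <;> intro h <;> nlinarith [h]
  rw [h1]
  have h2 : x * b = (ρ - x) * a ↔ Real.log (x * b) = Real.log ((ρ - x) * a) := by
    constructor
    · intro h; rw [h]
    · intro h
      have := congrArg Real.exp h
      rwa [Real.exp_log (by positivity), Real.exp_log (by positivity)] at this
  rw [h2, Real.log_mul hx.ne' hb.ne', Real.log_mul hρx.ne' ha.ne',
    ha_def, hb_def, Real.log_exp, Real.log_exp]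
  constructor
  · intro h
    field_simp at h
    nlinarith [h]
  · intro h
    field_simp
    nlinarith [h]


lemma logit_exu (ν : ℝ) (hν : 0 < ν) (V₁ V₂ : ℝ → ℝ)
    (hV₁ : ContDiff ℝ (⊤ : ℕ∞) V₁) (hV₂ : ContDiff ℝ (⊤ : ℕ∞) V₂)
    (hV₁' : ∀ x, deriv V₁ x ≤ 0) (hV₂' : ∀ x, deriv V₂ x ≤ 0)
    {ρ : ℝ} (hρ : 0 < ρ) :
    ∃! x, x ∈ Set.Ioo 0 ρ ∧
      ν * Real.log x - ν * Real.log (ρ - x) + V₂ (ρ - x) - V₁ x = 0 := by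
  set f : ℝ → ℝ := fun x => ν * Real.log x - ν * Real.log (ρ - x) + V₂ (ρ - x) - V₁ x
    with hf_def
  have hdV₁ : Differentiable ℝ V₁ := hV₁.differentiable (by simp)
  have hdV₂ : Differentiable ℝ V₂ := hV₂.differentiable (by simp)
  -- derivative of f on Ioo 0 ρ
  have hder : ∀ x ∈ Set.Ioo (0:ℝ) ρ,
      HasDerivAt f (ν * x⁻¹ - ν * ((ρ - x)⁻¹ * (-1)) + deriv V₂ (ρ - x) * (-1)
        - deriv V₁ x) x := by
    rintro x ⟨hx, hxρ⟩
    have hρx : 0 < ρ - x := by linarith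
    have hin : HasDerivAt (fun x : ℝ => ρ - x) (-1) x := (hasDerivAt_id x).const_sub ρ
    have h1 : HasDerivAt (fun x : ℝ => ν * Real.log x) (ν * x⁻¹) x :=
      (Real.hasDerivAt_log hx.ne').const_mul ν
    have h2 : HasDerivAt (fun x : ℝ => ν * Real.log (ρ - x)) (ν * ((ρ - x)⁻¹ * (-1))) x :=
      (((Real.hasDerivAt_log hρx.ne').comp x hin)).const_mul ν
    have h3 : HasDerivAt (fun x : ℝ => V₂ (ρ - x)) (deriv V₂ (ρ - x) * (-1)) x :=
      (hdV₂ (ρ - x)).hasDerivAt.comp x hin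
    have h4 : HasDerivAt V₁ (deriv V₁ x) x := (hdV₁ x).hasDerivAt
    exact ((h1.sub h2).add h3).sub h4
  have hcont : ContinuousOn f (Set.Ioo 0 ρ) :=
    fun x hx => ((hder x hx).continuousAt).continuousWithinAt
  have hmono : StrictMonoOn f (Set.Ioo 0 ρ) := by
    apply strictMonoOn_of_deriv_pos (convex_Ioo _ _) hcont
    rw [interior_Ioo]
    intro x hx
    rw [(hder x hx).deriv]
    obtain ⟨hx0, hxρ⟩ := hx
    have hρx : 0 < ρ - x := by linarith
    have i1 : 0 < ν * x⁻¹ := by positivity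
    have i2 : 0 < ν * (ρ - x)⁻¹ := by positivity
    have i3 := hV₂' (ρ - x)
    have i4 := hV₁' x
    nlinarith
  -- behavior near 0
  have hbot : Tendsto f (nhdsWithin 0 (Set.Ioi 0)) atBot := by
    have hlog : Tendsto (fun x : ℝ => ν * Real.log x) (nhdsWithin 0 (Set.Ioi 0)) atBot :=
      (Real.tendsto_log_nhdsGT_zero).const_mul_atBot hν
    have hg : Tendsto (fun x : ℝ => V₂ (ρ - x) - V₁ x - ν * Real.log (ρ - x))
        (nhdsWithin 0 (Set.Ioi 0)) (nhds (V₂ ρ - V₁ 0 - ν * Real.log ρ)) := by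
      have : ContinuousAt (fun x : ℝ => V₂ (ρ - x) - V₁ x - ν * Real.log (ρ - x)) 0 := by
        have c1 : ContinuousAt (fun x : ℝ => Real.log (ρ - x)) 0 :=
          (Real.continuousAt_log (by simpa using hρ.ne')).comp
            ((continuous_const.sub continuous_id).continuousAt)
        exact (((hV₂.continuous.comp (continuous_const.sub continuous_id)).continuousAt).sub
          hV₁.continuous.continuousAt).sub (c1.const_mul ν)
      simpa using this.continuousWithinAt.tendsto
    have hbd : ∀ᶠ x in nhdsWithin (0:ℝ) (Set.Ioi 0),
        V₂ (ρ - x) - V₁ x - ν * Real.log (ρ - x) ≤ (V₂ ρ - V₁ 0 - ν * Real.log ρ) + 1 :=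
      hg.eventually (eventually_le_nhds (lt_add_one _))
    have := tendsto_atBot_add_right_of_ge' _ _ hlog hbd
    exact this.congr (fun x => by simp [hf_def]; ring)
  -- behavior near ρ
  have htop : Tendsto f (nhdsWithin ρ (Set.Iio ρ)) atTop := by
    have hsub : Tendsto (fun x : ℝ => ρ - x) (nhdsWithin ρ (Set.Iio ρ))
        (nhdsWithin 0 (Set.Ioi 0)) := by
      rw [tendsto_nhdsWithin_iff]
      constructor
      · have : Tendsto (fun x : ℝ => ρ - x) (nhds ρ) (nhds (ρ - ρ)) :=
          tendsto_const_nhds.sub tendsto_id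
        simpa using this.mono_left nhdsWithin_le_nhds
      · exact eventually_mem_nhdsWithin.mono (fun x hx => by
          simp only [Set.mem_Iio] at hx; simpa using hx)
    have hlog : Tendsto (fun x : ℝ => ν * (-Real.log (ρ - x)))
        (nhdsWithin ρ (Set.Iio ρ)) atTop := by
      have := (Real.tendsto_log_nhdsGT_zero).comp hsub
      exact (tendsto_neg_atBot_atTop.comp this).const_mul_atTop hν
    have hg : Tendsto (fun x : ℝ => ν * Real.log x + V₂ (ρ - x) - V₁ x)
        (nhdsWithin ρ (Set.Iio ρ)) (nhds (ν * Real.log ρ + V₂ 0 - V₁ ρ)) := by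
      have : ContinuousAt (fun x : ℝ => ν * Real.log x + V₂ (ρ - x) - V₁ x) ρ := by
        have c1 : ContinuousAt Real.log ρ := Real.continuousAt_log hρ.ne'
        exact (((c1.comp continuous_id.continuousAt).const_mul ν).add
          ((hV₂.continuous.comp (continuous_const.sub continuous_id)).continuousAt)).sub
          hV₁.continuous.continuousAt
      simpa using this.continuousWithinAt.tendsto
    have hbd : ∀ᶠ x in nhdsWithin ρ (Set.Iio ρ),
        (ν * Real.log ρ + V₂ 0 - V₁ ρ) - 1 ≤ ν * Real.log x + V₂ (ρ - x) - V₁ x :=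
      hg.eventually (eventually_ge_nhds (by linarith))
    have := tendsto_atTop_add_right_of_le' _ _ hlog hbd
    exact this.congr (fun x => by simp [hf_def]; ring)
  -- find points with negative / positive values
  have hne1 : (nhdsWithin (0:ℝ) (Set.Ioi 0)).NeBot := nhdsGT_neBot 0
  have hne2 : (nhdsWithin ρ (Set.Iio ρ)).NeBot := nhdsLT_neBot ρ
  obtain ⟨x₁, hx₁f, hx₁m⟩ : ∃ x, f x < 0 ∧ x ∈ Set.Ioo (0:ℝ) ρ := by
    have h1 : ∀ᶠ x in nhdsWithin (0:ℝ) (Set.Ioi 0), f x < 0 :=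
      hbot.eventually (eventually_lt_atBot 0)
    have h2 : ∀ᶠ x in nhdsWithin (0:ℝ) (Set.Ioi 0), x ∈ Set.Ioo (0:ℝ) ρ := by
      have : Set.Iio ρ ∈ nhds (0:ℝ) := Iio_mem_nhds hρ
      filter_upwards [eventually_mem_nhdsWithin, mem_nhdsWithin_of_mem_nhds this]
        with x hx hx' using ⟨hx, hx'⟩
    exact (h1.and h2).exists
  obtain ⟨x₂, hx₂f, hx₂m⟩ : ∃ x, 0 < f x ∧ x ∈ Set.Ioo (0:ℝ) ρ := by
    have h1 : ∀ᶠ x in nhdsWithin ρ (Set.Iio ρ), 0 < f x :=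
      htop.eventually (eventually_gt_atTop 0)
    have h2 : ∀ᶠ x in nhdsWithin ρ (Set.Iio ρ), x ∈ Set.Ioo (0:ℝ) ρ := by
      have : Set.Ioi (0:ℝ) ∈ nhds ρ := Ioi_mem_nhds hρ
      filter_upwards [eventually_mem_nhdsWithin, mem_nhdsWithin_of_mem_nhds this]
        with x hx hx' using ⟨hx', hx⟩
    exact (h1.and h2).exists
  have hx12 : x₁ < x₂ := by
    rcases lt_trichotomy x₁ x₂ with h | h | h
    · exact h
    · exfalso; rw [h] at hx₁f; linarith
    · exfalso; have := hmono hx₂m hx₁m h; linarith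
  obtain ⟨c, hcm, hcf⟩ : ∃ c ∈ Set.Ioo x₁ x₂, f c = 0 := by
    have hsub : Set.Icc x₁ x₂ ⊆ Set.Ioo 0 ρ := fun y hy =>
      ⟨lt_of_lt_of_le hx₁m.1 hy.1, lt_of_le_of_lt hy.2 hx₂m.2⟩
    have := intermediate_value_Ioo (le_of_lt hx12) (hcont.mono hsub)
    have h0 : (0:ℝ) ∈ Set.Ioo (f x₁) (f x₂) := ⟨hx₁f, hx₂f⟩
    obtain ⟨c, hc1, hc2⟩ := this h0
    exact ⟨c, hc1, hc2⟩
  have hcmem : c ∈ Set.Ioo (0:ℝ) ρ :=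
    ⟨lt_trans hx₁m.1 hcm.1, lt_trans hcm.2 hx₂m.2⟩
  refine ⟨c, ⟨hcmem, hcf⟩, ?_⟩
  rintro y ⟨hym, hyf⟩
  have hyf' : f y = 0 := hyf
  exact hmono.injOn hym hcmem (hyf'.trans hcf.symm)


noncomputable def logitAuxEquiv (p q : ℝ) (h : q - p ≠ 0) : (ℝ × ℝ) ≃L[ℝ] ℝ × ℝ :=
  LinearEquiv.toContinuousLinearEquiv
    { toFun := fun z => (z.1 + z.2, p * z.1 + q * z.2)
      map_add' := fun z w => by ext <;> dsimp <;> ring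
      map_smul' := fun c z => by ext <;> dsimp <;> ring
      invFun := fun w => ((q * w.1 - w.2) / (q - p), (w.2 - p * w.1) / (q - p))
      left_inv := fun z => by ext <;> (dsimp; field_simp; ring)
      right_inv := fun w => by ext <;> (dsimp; field_simp; ring) }

lemma logitAuxEquiv_apply (p q : ℝ) (h : q - p ≠ 0) (z : ℝ × ℝ) :
    (logitAuxEquiv p q h : (ℝ × ℝ) →L[ℝ] ℝ × ℝ) z = (z.1 + z.2, p * z.1 + q * z.2) := rfl

section Sm

variable (ν : ℝ) (V₁ V₂ : ℝ → ℝ)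

/-- The auxiliary map used for the inverse function theorem. -/
noncomputable def logitH : ℝ × ℝ → ℝ × ℝ :=
  fun z => (z.1 + z.2, ν * Real.log z.1 - ν * Real.log z.2 + V₂ z.2 - V₁ z.1)

lemma logit_smooth_aux (hν : 0 < ν)
    (hV₁ : ContDiff ℝ (⊤ : ℕ∞) V₁) (hV₂ : ContDiff ℝ (⊤ : ℕ∞) V₂)
    (hV₁' : ∀ x, deriv V₁ x ≤ 0) (hV₂' : ∀ x, deriv V₂ x ≤ 0)
    {a₀ b₀ : ℝ} (ha₀ : 0 < a₀) (hb₀ : 0 < b₀) :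
    ∃ g : ℝ × ℝ → ℝ × ℝ,
      ContDiffAt ℝ (⊤ : ℕ∞) g (logitH ν V₁ V₂ (a₀, b₀)) ∧
      g (logitH ν V₁ V₂ (a₀, b₀)) = (a₀, b₀) ∧
      ∀ᶠ y in nhds (logitH ν V₁ V₂ (a₀, b₀)), logitH ν V₁ V₂ (g y) = y := by
  have hdV₁ : Differentiable ℝ V₁ := hV₁.differentiable (by simp)
  have hdV₂ : Differentiable ℝ V₂ := hV₂.differentiable (by simp)
  set z₀ : ℝ × ℝ := (a₀, b₀) with hz₀
  -- smoothness of H at z₀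
  have hlog1 : ContDiffAt ℝ (⊤ : ℕ∞) (fun z : ℝ × ℝ => Real.log z.1) z₀ :=
    (Real.contDiffAt_log.2 ha₀.ne').comp z₀ contDiff_fst.contDiffAt
  have hlog2 : ContDiffAt ℝ (⊤ : ℕ∞) (fun z : ℝ × ℝ => Real.log z.2) z₀ :=
    (Real.contDiffAt_log.2 hb₀.ne').comp z₀ contDiff_snd.contDiffAt
  have hcd : ContDiffAt ℝ (⊤ : ℕ∞) (logitH ν V₁ V₂) z₀ := by
    refine (contDiff_fst.contDiffAt.add contDiff_snd.contDiffAt).prodMk ?_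
    exact (((contDiffAt_const.mul hlog1).sub (contDiffAt_const.mul hlog2)).add
      ((hV₂.of_le (by simp)).contDiffAt.comp z₀ contDiff_snd.contDiffAt)).sub
      (hV₁.contDiffAt.comp z₀ contDiff_fst.contDiffAt)
  -- the derivative
  set p : ℝ := ν * a₀⁻¹ - deriv V₁ a₀ with hp_def
  set q : ℝ := -(ν * b₀⁻¹) + deriv V₂ b₀ with hq_def
  have hp : 0 < p := by
    have := hV₁' a₀; have : (0:ℝ) < ν * a₀⁻¹ := by positivity
    have := hV₁' a₀; simp only [hp_def]; nlinarith [hV₁' a₀]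
  have hq : q < 0 := by
    have : (0:ℝ) < ν * b₀⁻¹ := by positivity
    simp only [hq_def]; nlinarith [hV₂' b₀]
  have hqp : q - p ≠ 0 := by intro h; nlinarith
  set E := logitAuxEquiv p q hqp with hE_def
  -- HasFDerivAt
  have hfd : HasFDerivAt (logitH ν V₁ V₂) (E : (ℝ × ℝ) →L[ℝ] ℝ × ℝ) z₀ := by
    have d1 : HasDerivAt (fun t : ℝ => ν * Real.log t) (ν * a₀⁻¹) a₀ :=
      (Real.hasDerivAt_log ha₀.ne').const_mul ν
    have d2 : HasDerivAt (fun t : ℝ => ν * Real.log t) (ν * b₀⁻¹) b₀ :=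
      (Real.hasDerivAt_log hb₀.ne').const_mul ν
    have d3 : HasDerivAt V₂ (deriv V₂ b₀) b₀ := (hdV₂ b₀).hasDerivAt
    have d4 : HasDerivAt V₁ (deriv V₁ a₀) a₀ := (hdV₁ a₀).hasDerivAt
    have f1 : HasFDerivAt (fun z : ℝ × ℝ => ν * Real.log z.1)
        ((ContinuousLinearMap.smulRight (1 : ℝ →L[ℝ] ℝ) (ν * a₀⁻¹)).comp
          (ContinuousLinearMap.fst ℝ ℝ ℝ)) z₀ :=
      d1.hasFDerivAt.comp (f := Prod.fst) z₀ hasFDerivAt_fst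
    have f2 : HasFDerivAt (fun z : ℝ × ℝ => ν * Real.log z.2)
        ((ContinuousLinearMap.smulRight (1 : ℝ →L[ℝ] ℝ) (ν * b₀⁻¹)).comp
          (ContinuousLinearMap.snd ℝ ℝ ℝ)) z₀ :=
      d2.hasFDerivAt.comp (f := Prod.snd) z₀ hasFDerivAt_snd
    have f3 : HasFDerivAt (fun z : ℝ × ℝ => V₂ z.2)
        ((ContinuousLinearMap.smulRight (1 : ℝ →L[ℝ] ℝ) (deriv V₂ b₀)).comp
          (ContinuousLinearMap.snd ℝ ℝ ℝ)) z₀ :=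
      d3.hasFDerivAt.comp z₀ hasFDerivAt_snd
    have f4 : HasFDerivAt (fun z : ℝ × ℝ => V₁ z.1)
        ((ContinuousLinearMap.smulRight (1 : ℝ →L[ℝ] ℝ) (deriv V₁ a₀)).comp
          (ContinuousLinearMap.fst ℝ ℝ ℝ)) z₀ :=
      d4.hasFDerivAt.comp z₀ hasFDerivAt_fst
    have fsum : HasFDerivAt (fun z : ℝ × ℝ => z.1 + z.2)
        (ContinuousLinearMap.fst ℝ ℝ ℝ + ContinuousLinearMap.snd ℝ ℝ ℝ) z₀ :=
      hasFDerivAt_fst.add hasFDerivAt_snd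
    have hcomb := fsum.prodMk (((f1.sub f2).add f3).sub f4)
    have hEq : (E : (ℝ × ℝ) →L[ℝ] ℝ × ℝ) =
        (ContinuousLinearMap.fst ℝ ℝ ℝ + ContinuousLinearMap.snd ℝ ℝ ℝ).prod
          ((((ContinuousLinearMap.smulRight (1 : ℝ →L[ℝ] ℝ) (ν * a₀⁻¹)).comp
            (ContinuousLinearMap.fst ℝ ℝ ℝ) -
           (ContinuousLinearMap.smulRight (1 : ℝ →L[ℝ] ℝ) (ν * b₀⁻¹)).comp
            (ContinuousLinearMap.snd ℝ ℝ ℝ)) +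
           (ContinuousLinearMap.smulRight (1 : ℝ →L[ℝ] ℝ) (deriv V₂ b₀)).comp
            (ContinuousLinearMap.snd ℝ ℝ ℝ)) -
           (ContinuousLinearMap.smulRight (1 : ℝ →L[ℝ] ℝ) (deriv V₁ a₀)).comp
            (ContinuousLinearMap.fst ℝ ℝ ℝ)) := by
      apply ContinuousLinearMap.ext
      intro z
      rw [logitAuxEquiv_apply]
      simp only [ContinuousLinearMap.prod_apply, ContinuousLinearMap.add_apply,
        ContinuousLinearMap.sub_apply, ContinuousLinearMap.comp_apply,
        ContinuousLinearMap.smulRight_apply, ContinuousLinearMap.one_apply,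
        ContinuousLinearMap.coe_fst', ContinuousLinearMap.coe_snd', smul_eq_mul]
      rw [Prod.mk.injEq]
      exact ⟨rfl, by simp only [hp_def, hq_def]; ring⟩
    rw [hEq]
    exact hcomb
  have hn : ((⊤ : ℕ∞) : WithTop ℕ∞) ≠ 0 := by simp
  refine ⟨hcd.localInverse hfd hn, hcd.to_localInverse hfd hn,
    hcd.localInverse_apply_image hfd hn, ?_⟩
  exact (hcd.hasStrictFDerivAt' hfd hn).eventually_right_inverse

end Sm

/-- In the single-class two-lane case, the Logit fixed point defines the lane-1
density as an implicit but infinitely differentiable function `R` of the total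
density `ρ`: for each `ρ > 0`, `R ρ` is the unique `x ∈ (0, ρ)` satisfying
`x = ρ · exp(V₁(x)/ν) / (exp(V₁(x)/ν) + exp(V₂(ρ - x)/ν))`. -/
theorem logit_partial_density_smooth
    (ν : ℝ) (hν : 0 < ν) (V₁ V₂ : ℝ → ℝ)
    (hV₁ : ContDiff ℝ (⊤ : ℕ∞) V₁) (hV₂ : ContDiff ℝ (⊤ : ℕ∞) V₂)
    (hV₁' : ∀ x, deriv V₁ x ≤ 0) (hV₂' : ∀ x, deriv V₂ x ≤ 0) :
    ∃ R : ℝ → ℝ, ContDiffOn ℝ (⊤ : ℕ∞) R (Set.Ioi (0:ℝ)) ∧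
      ∀ ρ : ℝ, 0 < ρ →
        (0 < R ρ ∧ R ρ < ρ ∧
          R ρ = ρ * Real.exp (V₁ (R ρ) / ν) /
            (Real.exp (V₁ (R ρ) / ν) + Real.exp (V₂ (ρ - R ρ) / ν)) ∧
          ∀ x : ℝ, 0 < x → x < ρ →
            x = ρ * Real.exp (V₁ x / ν) /
              (Real.exp (V₁ x / ν) + Real.exp (V₂ (ρ - x) / ν)) → x = R ρ) := by
  classical
  have exu := fun (ρ : ℝ) (hρ : 0 < ρ) => logit_exu ν hν V₁ V₂ hV₁ hV₂ hV₁' hV₂' hρ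
  set R : ℝ → ℝ := fun ρ => if h : 0 < ρ then (exu ρ h).exists.choose else 0 with hR_def
  have hRspec : ∀ ρ (hρ : 0 < ρ), R ρ ∈ Set.Ioo 0 ρ ∧
      ν * Real.log (R ρ) - ν * Real.log (ρ - R ρ) + V₂ (ρ - R ρ) - V₁ (R ρ) = 0 := by
    intro ρ hρ
    have : R ρ = (exu ρ hρ).exists.choose := by rw [hR_def]; simp [dif_pos hρ]
    rw [this]
    exact (exu ρ hρ).exists.choose_spec
  have hRuniq : ∀ ρ (hρ : 0 < ρ) (x : ℝ), (x ∈ Set.Ioo 0 ρ ∧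
      ν * Real.log x - ν * Real.log (ρ - x) + V₂ (ρ - x) - V₁ x = 0) → x = R ρ := by
    intro ρ hρ x hx
    exact (exu ρ hρ).unique hx (hRspec ρ hρ)
  refine ⟨R, ?_, ?_⟩
  · -- smoothness
    intro ρ₀ hρ₀'
    have hρ₀ : 0 < ρ₀ := hρ₀'
    apply ContDiffAt.contDiffWithinAt
    obtain ⟨⟨ha₀, ha₀ρ⟩, hfa₀⟩ := hRspec ρ₀ hρ₀
    have hb₀ : 0 < ρ₀ - R ρ₀ := by linarith
    obtain ⟨g, hgsmooth, hg0, hginv⟩ :=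
      logit_smooth_aux ν V₁ V₂ hν hV₁ hV₂ hV₁' hV₂' ha₀ hb₀
    have hHz₀ : logitH ν V₁ V₂ (R ρ₀, ρ₀ - R ρ₀) = (ρ₀, 0) := by
      rw [logitH, Prod.mk.injEq]
      constructor
      · ring
      · exact hfa₀
    rw [hHz₀] at hgsmooth hg0 hginv
    -- local smooth candidate
    have hmk : ContDiffAt ℝ (⊤ : ℕ∞) (fun ρ : ℝ => ((ρ, 0) : ℝ × ℝ)) ρ₀ :=
      contDiffAt_id.prodMk contDiffAt_const
    have hRloc : ContDiffAt ℝ (⊤ : ℕ∞) (fun ρ : ℝ => (g (ρ, 0)).1) ρ₀ :=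
      contDiff_fst.contDiffAt.comp _ (hgsmooth.comp ρ₀ hmk)
    -- R agrees with the local candidate near ρ₀
    have hmk_tendsto : Tendsto (fun ρ : ℝ => ((ρ, 0) : ℝ × ℝ)) (nhds ρ₀) (nhds (ρ₀, 0)) :=
      (continuous_id.prodMk continuous_const).continuousAt
    have hq1 : ∀ᶠ ρ in nhds ρ₀, logitH ν V₁ V₂ (g (ρ, 0)) = (ρ, 0) :=
      hmk_tendsto.eventually hginv
    have hgc : Tendsto (fun ρ : ℝ => g (ρ, 0)) (nhds ρ₀) (nhds (R ρ₀, ρ₀ - R ρ₀)) := by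
      have h := hgsmooth.continuousAt.tendsto
      rw [hg0] at h
      exact h.comp hmk_tendsto
    have t1 : Tendsto (fun ρ : ℝ => (g (ρ, 0)).1) (nhds ρ₀) (nhds (R ρ₀)) :=
      (continuous_fst.tendsto _).comp hgc
    have t2 : Tendsto (fun ρ : ℝ => (g (ρ, 0)).2) (nhds ρ₀) (nhds (ρ₀ - R ρ₀)) :=
      (continuous_snd.tendsto _).comp hgc
    have hpos1 : ∀ᶠ ρ in nhds ρ₀, 0 < (g (ρ, 0)).1 := t1.eventually (eventually_gt_nhds ha₀)
    have hpos2 : ∀ᶠ ρ in nhds ρ₀, 0 < (g (ρ, 0)).2 := t2.eventually (eventually_gt_nhds hb₀)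
    have hq3 : ∀ᶠ ρ in nhds ρ₀, (0:ℝ) < ρ := eventually_gt_nhds hρ₀
    have heq : (fun ρ : ℝ => (g (ρ, 0)).1) =ᶠ[nhds ρ₀] R := by
      filter_upwards [hq1, hpos1, hpos2, hq3] with ρ h1 h2 h3 h4
      simp only [logitH] at h1
      rw [Prod.mk.injEq] at h1
      obtain ⟨e1, e2⟩ := h1
      apply hRuniq ρ h4
      refine ⟨⟨h2, by linarith⟩, ?_⟩
      have hb : ρ - (g (ρ, 0)).1 = (g (ρ, 0)).2 := by linarith
      rw [hb]
      exact e2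
    exact hRloc.congr_of_eventuallyEq heq.symm
  · intro ρ hρ
    obtain ⟨⟨h1, h2⟩, h3⟩ := hRspec ρ hρ
    refine ⟨h1, h2, ?_, ?_⟩
    · exact (logit_eq_iff ν hν V₁ V₂ h1 h2).2 h3
    · intro x hx0 hxρ hxeq
      exact hRuniq ρ hρ x ⟨⟨hx0, hxρ⟩, (logit_eq_iff ν hν V₁ V₂ hx0 hxρ).1 hxeq⟩
end
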